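/- Let G₁ be a finite-index subgroup of a group G, let H₁ ≤ G₁ and H₂ ≤ G be subgroups, and let g₁,…,g_k be representatives of the left cosets of G₁ in G. Suppose that for each i such that g_i⁻¹H₂g_i ≤ G₁, the subgroup H₁ is con-separated from g_i⁻¹H₂g_i within G₁. Then H₁ is con-separated from H₂ within G. -/

import Mathlib

/-- The conjugate subgroup `c⁻¹ H c`. -/
def conjBy {G : Type*} [Group G] (c : G) (H : Subgroup G) : Subgroup G :=
  H.map (MulAut.conj c⁻¹).toMonoidHom

/-- `H₁` is con-separated from `H₂` within the subgroup `G₁` of the ambient group: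
there is a subgroup `D ≤ G₁` of finite index in `G₁` containing `H₁` such that no
`G₁`-conjugate of `H₂` is contained in `D`. -/
def ConSepWithin {G : Type*} [Group G] (G₁ H₁ H₂ : Subgroup G) : Prop :=
  ∃ D : Subgroup G, D ≤ G₁ ∧ D.relIndex G₁ ≠ 0 ∧ H₁ ≤ D ∧
    ∀ g ∈ G₁, ¬ conjBy g H₂ ≤ D

/-! Intersecting the witnesses for the cosets `gᵢ G₁` with `gᵢ⁻¹ H₂ gᵢ ≤ G₁` gives the witness:
every conjugate `x⁻¹ H₂ x` is `h⁻¹ (gᵢ⁻¹ H₂ gᵢ) h` for some `h ∈ G₁`, and if `gᵢ⁻¹ H₂ gᵢ` is not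
inside `G₁`, then neither is this conjugate. -/

section

variable {G : Type*} [Group G]

lemma mem_conjBy {H : Subgroup G} {c y : G} : y ∈ conjBy c H ↔ c * y * c⁻¹ ∈ H := by
  rw [conjBy, Subgroup.mem_map_equiv]
  simp [MulAut.conj, mul_assoc]

lemma conjBy_mul (a b : G) (H : Subgroup G) : conjBy (a * b) H = conjBy b (conjBy a H) := by
  ext y
  simp only [mem_conjBy, mul_inv_rev]
  group

lemma conjBy_le_iff_of_mem {G₁ : Subgroup G} {h : G} (hh : h ∈ G₁) (K : Subgroup G) :
    conjBy h K ≤ G₁ ↔ K ≤ G₁ := by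
  constructor
  · intro hK y hy
    have : h * (h⁻¹ * y * h) * h⁻¹ ∈ K := by simpa [mul_assoc] using hy
    simpa [mul_assoc] using
      mul_mem (mul_mem hh (hK (mem_conjBy.mpr this))) (inv_mem hh)
  · intro hK y hy
    have := mul_mem (mul_mem (inv_mem hh) (hK (mem_conjBy.mp hy))) hh
    simpa [mul_assoc] using this

lemma index_ne_zero_of_relIndex_ne_zero {D G₁ : Subgroup G} (hD : D ≤ G₁)
    (hrel : D.relIndex G₁ ≠ 0) (hfin : G₁.index ≠ 0) : D.index ≠ 0 := by
  rw [← Subgroup.relIndex_mul_index hD]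
  exact mul_ne_zero hrel hfin

lemma exists_witness_for_coset {G₁ H₁ H₂ : Subgroup G} (hfin : G₁.index ≠ 0) (hH₁ : H₁ ≤ G₁)
    (c : G) (hsep : conjBy c H₂ ≤ G₁ → ConSepWithin G₁ H₁ (conjBy c H₂)) :
    ∃ E : Subgroup G, E.index ≠ 0 ∧ H₁ ≤ E ∧ ∀ h ∈ G₁, ¬ conjBy (c * h) H₂ ≤ E := by
  by_cases hc : conjBy c H₂ ≤ G₁
  · obtain ⟨D, hDG₁, hrel, hH₁D, hD⟩ := hsep hc
    refine ⟨D, index_ne_zero_of_relIndex_ne_zero hDG₁ hrel hfin, hH₁D, fun h hh => ?_⟩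
    rw [conjBy_mul]
    exact hD h hh
  · refine ⟨G₁, hfin, hH₁, fun h hh hle => hc ?_⟩
    rwa [conjBy_mul, conjBy_le_iff_of_mem hh] at hle

end

/-- Con-separation passes from a finite index subgroup to the ambient group. -/
theorem stmt_5 {G : Type*} [Group G] (G₁ H₁ H₂ : Subgroup G)
    (hfin : G₁.index ≠ 0) (hH₁ : H₁ ≤ G₁)
    (k : ℕ) (g : Fin k → G)
    (hreps : ∀ x : G, ∃ (i : Fin k), ∃ h ∈ G₁, x = g i * h)
    (hsep : ∀ i : Fin k, conjBy (g i) H₂ ≤ G₁ →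
      ConSepWithin G₁ H₁ (conjBy (g i) H₂)) :
    ∃ D : Subgroup G, D.index ≠ 0 ∧ H₁ ≤ D ∧ ∀ x : G, ¬ conjBy x H₂ ≤ D := by
  choose E hEfin hH₁E hE using fun i => exists_witness_for_coset hfin hH₁ (g i) (hsep i)
  refine ⟨⨅ i, E i, Subgroup.index_iInf_ne_zero hEfin, le_iInf hH₁E, fun x hx => ?_⟩
  obtain ⟨i, h, hh, rfl⟩ := hreps x
  exact hE i h hh (hx.trans (iInf_le E i))
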